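/- If H is a graph with |V(H)| ≥ k and G is a non-trivial graph (at least two vertices), then γ_rk(G ∘ H) ≤ min{ k|A| + γ_rk(H)|B| : (A,B) is a dominating couple of G }. -/

import Mathlib

/-!
Given a dominating couple `(A, B)` of `G`, label the fibre `{a} × V(H)` of `G ∘ H` by putting all
`k` colours on a single vertex when `a ∈ A`, by a minimum `k`-rainbow dominating function of `H`
when `a ∈ B`, and by `∅` otherwise. A vertex over `x ∈ B` with empty label is rainbow dominated
inside its own fibre. A vertex over `x ∉ B` is adjacent to the whole fibre over a `G`-neighbour
`w ∈ A ∪ B`, and that fibre carries every colour: trivially when `w ∈ A`, and when `w ∈ B`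
because `k ≤ |V(H)|` allows choosing the minimum rainbow dominating function of `H` so that it
uses every colour.
-/

open Finset

def SimpleGraph.lexProd {α β : Type*} (G : SimpleGraph α) (H : SimpleGraph β) :
    SimpleGraph (α × β) where
  Adj x y := G.Adj x.1 y.1 ∨ (x.1 = y.1 ∧ H.Adj x.2 y.2)
  symm := by
    constructor
    intro x y h
    rcases h with h | ⟨e, h⟩
    · exact Or.inl h.symm
    · exact Or.inr ⟨e.symm, h.symm⟩
  loopless := by
    constructor
    intro x h
    rcases h with h | ⟨_, h⟩
    · exact G.irrefl h
    · exact H.irrefl h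

/-- `f` is a `k`-rainbow dominating function of `G`. -/
def IsRDF {α : Type*} (G : SimpleGraph α) (k : ℕ) (f : α → Finset (Fin k)) : Prop :=
  ∀ v, f v = ∅ → ∀ i : Fin k, ∃ u, G.Adj u v ∧ i ∈ f u

/-- weight of a labeling -/
def rdWeight {α : Type*} [Fintype α] {k : ℕ} (f : α → Finset (Fin k)) : ℕ :=
  ∑ v, (f v).card

/-- the `k`-rainbow domination number -/
noncomputable def rdNum {α : Type*} (G : SimpleGraph α) [Fintype α] (k : ℕ) : ℕ :=
  sInf {n | ∃ f : α → Finset (Fin k), IsRDF G k f ∧ rdWeight f = n}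

/-- `D` is a dominating set of `G` -/
def IsDom {α : Type*} (G : SimpleGraph α) (D : Set α) : Prop :=
  ∀ v, v ∈ D ∨ ∃ u ∈ D, G.Adj u v

/-- `D` is a total dominating set of `G` -/
def IsTotalDom {α : Type*} (G : SimpleGraph α) (D : Set α) : Prop :=
  ∀ v, ∃ u ∈ D, G.Adj u v

/-- the domination number -/
noncomputable def domNum {α : Type*} (G : SimpleGraph α) [Fintype α] : ℕ :=
  sInf {n | ∃ D : Finset α, IsDom G ↑D ∧ D.card = n}

/-- the total domination number -/
noncomputable def totalDomNum {α : Type*} (G : SimpleGraph α) [Fintype α] : ℕ :=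
  sInf {n | ∃ D : Finset α, IsTotalDom G ↑D ∧ D.card = n}

/-- `(A, B)` is a dominating couple of `G` -/
def IsDomCouple {α : Type*} [DecidableEq α] (G : SimpleGraph α) (A B : Finset α) : Prop :=
  Disjoint A B ∧ ∀ x, x ∉ B → ∃ w ∈ A ∪ B, G.Adj w x

section RainbowDomination

variable {α β : Type*} {k : ℕ}

theorem isRDF_const_univ (G : SimpleGraph α) (k : ℕ) : IsRDF G k fun _ => univ := by
  intro v hv i
  exact absurd hv (univ_nonempty_iff.mpr ⟨i⟩).ne_empty

theorem rdNum_le_rdWeight [Fintype α] {G : SimpleGraph α} {f : α → Finset (Fin k)}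
    (hf : IsRDF G k f) : rdNum G k ≤ rdWeight f :=
  Nat.sInf_le ⟨f, hf, rfl⟩

theorem exists_isRDF_rdWeight_eq_rdNum [Fintype α] (G : SimpleGraph α) (k : ℕ) :
    ∃ f : α → Finset (Fin k), IsRDF G k f ∧ rdWeight f = rdNum G k :=
  Nat.sInf_mem (s := {n | ∃ f : α → Finset (Fin k), IsRDF G k f ∧ rdWeight f = n})
    ⟨_, fun _ => univ, isRDF_const_univ G k, rfl⟩

theorem rdNum_zero [Fintype α] (G : SimpleGraph α) : rdNum G 0 = 0 :=
  Nat.eq_zero_of_le_zero <| Nat.sInf_le ⟨fun _ => ∅, fun _ _ i => i.elim0, by simp [rdWeight]⟩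

theorem exists_isRDF_rdWeight_le_rdNum_forall_mem [Fintype β] [NeZero k] (H : SimpleGraph β)
    (hk : k ≤ Fintype.card β) :
    ∃ g : β → Finset (Fin k), IsRDF H k g ∧ rdWeight g ≤ rdNum H k ∧ ∀ i, ∃ b, i ∈ g b := by
  obtain ⟨f, hf, hfw⟩ := exists_isRDF_rdWeight_eq_rdNum H k
  by_cases hempty : ∃ b, f b = ∅
  · obtain ⟨b, hb⟩ := hempty
    refine ⟨f, hf, hfw.le, fun i => ?_⟩
    obtain ⟨u, -, hu⟩ := hf b hb i
    exact ⟨u, hu⟩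
  -- Otherwise `f` has weight at least `|V(H)|`, which any surjective singleton labelling attains.
  push Not at hempty
  obtain ⟨ι⟩ : Nonempty (Fin k ↪ β) := Function.Embedding.nonempty_of_card_le (by simpa using hk)
  have hσ : Function.Surjective (Function.invFun ι) := Function.invFun_surjective ι.injective
  refine ⟨fun b => {Function.invFun ι b}, fun v hv => absurd hv (singleton_ne_empty _), ?_,
    fun i => (hσ i).imp fun b hb => by simp [hb]⟩
  calc rdWeight (fun b => ({Function.invFun ι b} : Finset (Fin k)))
      = ∑ _ : β, 1 := by simp [rdWeight]
    _ ≤ rdWeight f := sum_le_sum fun b _ => card_pos.mpr (hempty b)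
    _ = rdNum H k := hfw

theorem rdWeight_ite_eq_univ [Fintype β] [DecidableEq β] (b₀ : β) :
    rdWeight (fun b => if b = b₀ then (univ : Finset (Fin k)) else ∅) = k := by
  simp [rdWeight, apply_ite card]

end RainbowDomination

section LexProd

variable {α β : Type*} [DecidableEq α] {k : ℕ}

theorem isDomCouple_empty_univ [Fintype α] (G : SimpleGraph α) : IsDomCouple G ∅ univ :=
  ⟨disjoint_empty_left _, fun x hx => absurd (mem_univ x) hx⟩

def coupleLabeling (A B : Finset α) (fA fB : β → Finset (Fin k)) : α × β → Finset (Fin k) :=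
  fun p => if p.1 ∈ A then fA p.2 else if p.1 ∈ B then fB p.2 else ∅

theorem isRDF_coupleLabeling {G : SimpleGraph α} {H : SimpleGraph β} {A B : Finset α}
    {fA fB : β → Finset (Fin k)} (hAB : IsDomCouple G A B) (hA : ∀ i, ∃ b, i ∈ fA b)
    (hB : IsRDF H k fB) (hB' : ∀ i, ∃ b, i ∈ fB b) :
    IsRDF (G.lexProd H) k (coupleLabeling A B fA fB) := by
  obtain ⟨hdisj, hdom⟩ := hAB
  rintro ⟨x, y⟩ hxy i
  by_cases hxB : x ∈ B
  · have hxA : x ∉ A := disjoint_right.mp hdisj hxB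
    simp only [coupleLabeling, hxA, hxB, if_false, if_true] at hxy
    obtain ⟨u, hu, hiu⟩ := hB y hxy i
    exact ⟨(x, u), Or.inr ⟨rfl, hu⟩, by simpa [coupleLabeling, hxA, hxB] using hiu⟩
  · obtain ⟨w, hw, hadj⟩ := hdom x hxB
    rcases mem_union.mp hw with hwA | hwB
    · obtain ⟨b, hb⟩ := hA i
      exact ⟨(w, b), Or.inl hadj, by simpa [coupleLabeling, hwA] using hb⟩
    · have hwA : w ∉ A := disjoint_right.mp hdisj hwB
      obtain ⟨b, hb⟩ := hB' i
      exact ⟨(w, b), Or.inl hadj, by simpa [coupleLabeling, hwA, hwB] using hb⟩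

theorem rdWeight_coupleLabeling [Fintype α] [Fintype β] {A B : Finset α} (hAB : Disjoint A B)
    (fA fB : β → Finset (Fin k)) :
    rdWeight (coupleLabeling A B fA fB) = A.card * rdWeight fA + B.card * rdWeight fB := by
  have hfibre : ∀ a, ∑ b, (coupleLabeling A B fA fB (a, b)).card =
      (if a ∈ A then rdWeight fA else 0) + (if a ∈ B then rdWeight fB else 0) := by
    intro a
    by_cases haA : a ∈ A
    · simp [coupleLabeling, rdWeight, haA, disjoint_left.mp hAB haA]
    · by_cases haB : a ∈ B <;> simp [coupleLabeling, rdWeight, haA, haB]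
  rw [rdWeight, Fintype.sum_prod_type, sum_congr rfl fun a _ => hfibre a, sum_add_distrib,
    sum_ite_mem, sum_ite_mem, univ_inter, univ_inter, sum_const, sum_const, smul_eq_mul,
    smul_eq_mul]

theorem rdNum_lexProd_le_of_isDomCouple [Fintype α] [Fintype β] {G : SimpleGraph α}
    (H : SimpleGraph β) {A B : Finset α} (hAB : IsDomCouple G A B) (hk : k ≤ Fintype.card β) :
    rdNum (G.lexProd H) k ≤ k * A.card + rdNum H k * B.card := by
  classical
  rcases Nat.eq_zero_or_pos k with rfl | hk0
  · simp [rdNum_zero]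
  have : NeZero k := ⟨hk0.ne'⟩
  obtain ⟨b₀⟩ : Nonempty β := Fintype.card_pos_iff.mp (hk0.trans_le hk)
  obtain ⟨g, hg, hgw, hg_mem⟩ := exists_isRDF_rdWeight_le_rdNum_forall_mem H hk
  let fA : β → Finset (Fin k) := fun b => if b = b₀ then univ else ∅
  have hfA : ∀ i, ∃ b, i ∈ fA b := fun i => ⟨b₀, by simp [fA]⟩
  calc rdNum (G.lexProd H) k ≤ rdWeight (coupleLabeling A B fA g) :=
        rdNum_le_rdWeight (isRDF_coupleLabeling hAB hfA hg hg_mem)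
    _ = A.card * k + B.card * rdWeight g := by
        rw [rdWeight_coupleLabeling hAB.1, rdWeight_ite_eq_univ]
    _ ≤ k * A.card + rdNum H k * B.card := by
        rw [mul_comm k, mul_comm (rdNum H k)]
        gcongr

end LexProd

theorem stmt4_general {α β : Type*} [Fintype α] [Fintype β] [DecidableEq α]
    (G : SimpleGraph α) (H : SimpleGraph β)
    (hH : k ≤ Fintype.card β) :
    rdNum (G.lexProd H) k ≤
      sInf {n | ∃ A B : Finset α, IsDomCouple G A B ∧ n = k * A.card + rdNum H k * B.card} := by
  refine le_csInf ⟨_, ∅, univ, isDomCouple_empty_univ G, rfl⟩ ?_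
  rintro n ⟨A, B, hAB, rfl⟩
  exact rdNum_lexProd_le_of_isDomCouple H hAB hH

theorem stmt4 {α β : Type*} [Fintype α] [Fintype β] [DecidableEq α]
    (G : SimpleGraph α) (H : SimpleGraph β)
    (hH : k ≤ Fintype.card β) (hG : Nontrivial α) :
    rdNum (G.lexProd H) k ≤
      sInf {n | ∃ A B : Finset α, IsDomCouple G A B ∧ n = k * A.card + rdNum H k * B.card} :=
  stmt4_general G H hH
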